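/- arXiv:0911.4075 — 3 statements merged into one kernel-verified Lean document; each statement's English description precedes it below -/
import Mathlib

section
/- For every T1 topological space X, sb_χ(X) ≤ 2^{cs*_χ(X)}. -/
open Set Filter Topology Cardinal Pointwise

universe u v

section Defs

variable {X : Type u} [TopologicalSpace X]

/-- A sequence converging to `x`: a countably infinite set `S` such that `S \ U` is finite
for every neighborhood `U` of `x`. -/
def ConvSeqTo (S : Set X) (x : X) : Prop :=
  S.Countable ∧ S.Infinite ∧ ∀ U ∈ 𝓝 x, (S \ U).Finite

/-- `𝒩` is a cs*-network at `x`: for every neighborhood `U` of `x` and every sequence `S`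
converging to `x` there is `N ∈ 𝒩` with `N ⊆ U` containing infinitely many members of `S`. -/
def IsCsStarNetworkAt (𝒩 : Set (Set X)) (x : X) : Prop :=
  ∀ U ∈ 𝓝 x, ∀ S : Set X, ConvSeqTo S x → ∃ N ∈ 𝒩, N ⊆ U ∧ (S ∩ N).Infinite

/-- `𝒩` is a cs-network at `x`: for every neighborhood `U` of `x` and every sequence `S`
converging to `x` there is `N ∈ 𝒩` with `N ⊆ U` containing all but finitely many members. -/
def IsCsNetworkAt (𝒩 : Set (Set X)) (x : X) : Prop :=
  ∀ U ∈ 𝓝 x, ∀ S : Set X, ConvSeqTo S x → ∃ N ∈ 𝒩, N ⊆ U ∧ (S \ N).Finite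

/-- `B` is a sequential barrier at `x`: every sequence converging to `x` lies eventually in `B`. -/
def IsSeqBarrierAt (B : Set X) (x : X) : Prop :=
  ∀ S : Set X, ConvSeqTo S x → (S \ B).Finite

/-- `𝒩` is an sb-network at `x`. -/
def IsSbNetworkAt (𝒩 : Set (Set X)) (x : X) : Prop :=
  ∀ U ∈ 𝓝 x, ∃ N ∈ 𝒩, x ∈ N ∧ N ⊆ U ∧ IsSeqBarrierAt N x

/-- `𝒩` is a neighborhood base at `x`. -/
def IsNbhdBasisAt (𝒩 : Set (Set X)) (x : X) : Prop :=
  (∀ N ∈ 𝒩, N ∈ 𝓝 x) ∧ ∀ U ∈ 𝓝 x, ∃ N ∈ 𝒩, N ⊆ U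

/-- Smallest cardinality of a cs*-network at `x`. -/
noncomputable def csStarCharAt (x : X) : Cardinal.{u} :=
  sInf {c | ∃ 𝒩 : Set (Set X), IsCsStarNetworkAt 𝒩 x ∧ #𝒩 = c}

/-- Smallest cardinality of a cs-network at `x`. -/
noncomputable def csCharAt (x : X) : Cardinal.{u} :=
  sInf {c | ∃ 𝒩 : Set (Set X), IsCsNetworkAt 𝒩 x ∧ #𝒩 = c}

/-- Smallest cardinality of an sb-network at `x`. -/
noncomputable def sbCharAt (x : X) : Cardinal.{u} :=
  sInf {c | ∃ 𝒩 : Set (Set X), IsSbNetworkAt 𝒩 x ∧ #𝒩 = c}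

/-- Smallest cardinality of a neighborhood base at `x`. -/
noncomputable def charAt (x : X) : Cardinal.{u} :=
  sInf {c | ∃ 𝒩 : Set (Set X), IsNbhdBasisAt 𝒩 x ∧ #𝒩 = c}

end Defs

/-- The cs*-character of a space (`1` for the empty space). -/
noncomputable def csStarChar (X : Type u) [TopologicalSpace X] : Cardinal.{u} :=
  max 1 (⨆ x : X, csStarCharAt x)

/-- The cs-character of a space (`1` for the empty space). -/
noncomputable def csChar (X : Type u) [TopologicalSpace X] : Cardinal.{u} :=
  max 1 (⨆ x : X, csCharAt x)

/-- The sb-character of a space (`1` for the empty space). -/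
noncomputable def sbChar (X : Type u) [TopologicalSpace X] : Cardinal.{u} :=
  max 1 (⨆ x : X, sbCharAt x)

/-- The character of a space (`1` for the empty space). -/
noncomputable def charCard (X : Type u) [TopologicalSpace X] : Cardinal.{u} :=
  max 1 (⨆ x : X, charAt x)

/-- `X` has countable cs*-character: every point has a countable cs*-network. -/
def CountableCsStarChar (X : Type u) [TopologicalSpace X] : Prop :=
  ∀ x : X, ∃ 𝒩 : Set (Set X), 𝒩.Countable ∧ IsCsStarNetworkAt 𝒩 x

/-- `X` has countable sb-character: every point has a countable sb-network. -/
def CountableSbChar (X : Type u) [TopologicalSpace X] : Prop :=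
  ∀ x : X, ∃ 𝒩 : Set (Set X), 𝒩.Countable ∧ IsSbNetworkAt 𝒩 x

/-- `X` carries the inductive topology with respect to the cover `𝒞`: a set is closed iff its
trace on each `C ∈ 𝒞` is closed in the subspace `C`. -/
def InductiveTopology (X : Type u) [TopologicalSpace X] (𝒞 : Set (Set X)) : Prop :=
  ∀ F : Set X, IsClosed F ↔ ∀ C ∈ 𝒞, IsClosed (Subtype.val ⁻¹' F : Set C)

/-- A `k_ω`-space: inductive topology w.r.t. a countable cover by compact sets. -/
def IsKOmegaSpace (X : Type u) [TopologicalSpace X] : Prop :=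
  ∃ 𝒞 : Set (Set X), 𝒞.Countable ∧ ⋃₀ 𝒞 = Set.univ ∧ (∀ C ∈ 𝒞, IsCompact C) ∧
    InductiveTopology X 𝒞

/-- An `MK_ω`-space: inductive topology w.r.t. a countable cover by compact metrizable sets. -/
def IsMKOmegaSpace (X : Type u) [TopologicalSpace X] : Prop :=
  ∃ 𝒞 : Set (Set X), 𝒞.Countable ∧ ⋃₀ 𝒞 = Set.univ ∧
    (∀ C ∈ 𝒞, IsCompact C ∧ TopologicalSpace.MetrizableSpace C) ∧ InductiveTopology X 𝒞

/-- An `M_ω`-space: inductive topology w.r.t. a countable cover by closed metrizable sets. -/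
def IsMOmegaSpace (X : Type u) [TopologicalSpace X] : Prop :=
  ∃ 𝒞 : Set (Set X), 𝒞.Countable ∧ ⋃₀ 𝒞 = Set.univ ∧
    (∀ C ∈ 𝒞, IsClosed C ∧ TopologicalSpace.MetrizableSpace C) ∧ InductiveTopology X 𝒞

/-- An α₄-space: given countably many sequences converging to a common point `x`, some sequence
converging to `x` meets infinitely many of them. -/
def Alpha4Space (X : Type u) [TopologicalSpace X] : Prop :=
  ∀ (x : X) (S : ℕ → Set X), (∀ n, ConvSeqTo (S n) x) →
    ∃ T : Set X, ConvSeqTo T x ∧ {n | (T ∩ S n).Nonempty}.Infinite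

/-- An α₇-space: given countably many sequences converging to a common point `x`, some sequence
converging to some point `y` meets infinitely many of them. -/
def Alpha7Space (X : Type u) [TopologicalSpace X] : Prop :=
  ∀ (x : X) (S : ℕ → Set X), (∀ n, ConvSeqTo (S n) x) →
    ∃ (T : Set X) (y : X), ConvSeqTo T y ∧ {n | (T ∩ S n).Nonempty}.Infinite

/-- The small cardinal 𝔭: the smallest cardinality of a family of infinite subsets of ω closed
under finite intersections and having no infinite pseudo-intersection. -/
noncomputable def pCard : Cardinal.{0} :=
  sInf {c | ∃ F : Set (Set ℕ), (∀ A ∈ F, A.Infinite) ∧ (∀ A ∈ F, ∀ B ∈ F, A ∩ B ∈ F) ∧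
    (¬ ∃ I : Set ℕ, I.Infinite ∧ ∀ A ∈ F, (I \ A).Finite) ∧ #F = c}

/-- The small cardinal 𝔡: the smallest cardinality of a dominating family in `ℕ → ℕ`. -/
noncomputable def dCard : Cardinal.{0} :=
  sInf {c | ∃ D : Set (ℕ → ℕ), (∀ f : ℕ → ℕ, ∃ g ∈ D, ∀ n, f n ≤ g n) ∧ #D = c}

/-- The pseudocharacter of `X`: the least `c` such that every singleton is the intersection of a
family of at most `c` open sets. -/
noncomputable def psiChar (X : Type u) [TopologicalSpace X] : Cardinal.{u} :=
  sInf {c | ∀ x : X, ∃ 𝒰 : Set (Set X), (∀ U ∈ 𝒰, IsOpen U) ∧ ⋂₀ 𝒰 = {x} ∧ #𝒰 ≤ c}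

/-- The weight of `X`: the smallest cardinality of a base of the topology. -/
noncomputable def weightCard (X : Type u) [TopologicalSpace X] : Cardinal.{u} :=
  sInf {c | ∃ B : Set (Set X), TopologicalSpace.IsTopologicalBasis B ∧ #B = c}

/-- Transfinite iteration of the sequential closure: `A^{(α)}`. -/
noncomputable def seqClIter {X : Type u} [TopologicalSpace X] (A : Set X) :
    Ordinal.{0} → Set X
  | α => A ∪ ⋃ β : {β : Ordinal.{0} // β < α}, seqClosure (seqClIter A β.1)
termination_by α => α
decreasing_by exact β.2

/-- The sequential order of `X`: the least ordinal `α` with `A^{(α+1)} = A^{(α)}` for all `A`. -/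
noncomputable def seqOrder (X : Type u) [TopologicalSpace X] : Ordinal.{0} :=
  sInf {α | ∀ A : Set X, seqClIter A (α + 1) = seqClIter A α}

/-- The cardinality `|[κ]^{≤ω}|` of the family of countable subsets of (a set of cardinality)
`κ`. -/
noncomputable def countableSubsetsCard (c : Cardinal.{u}) : Cardinal.{u} :=
  #{A : Set (Quotient.out c) // A.Countable}

/-- The space `𝕃 = {(0,0)} ∪ {(1/n, 1/(nm)) : n,m ∈ ℕ}` as a subspace of `ℝ²`. -/
def LSpace : Set (ℝ × ℝ) :=
  {(0, 0)} ∪ {p | ∃ n m : ℕ, 0 < n ∧ 0 < m ∧ p = (1 / (n : ℝ), 1 / ((n : ℝ) * (m : ℝ)))}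

/-!
If `𝒩` is a cs*-network at `x` and `U` is a neighborhood of `x`, then `x` together with the
union of the members of `𝒩` contained in `U` is a sequential barrier at `x` inside `U`: a
sequence converging to `x` with infinitely many terms outside it would have a subsequence
converging to `x` that meets no member of `𝒩` inside `U`. These sets are indexed by subfamilies
of `𝒩`, so they form an sb-network of cardinality at most `2 ^ #𝒩`.
-/

section

variable {X : Type u} [TopologicalSpace X] {x : X}

lemma ConvSeqTo.mono {S T : Set X} (hS : ConvSeqTo S x) (hTS : T ⊆ S) (hT : T.Infinite) :
    ConvSeqTo T x :=
  ⟨hS.1.mono hTS, hT, fun U hU => (hS.2.2 U hU).subset (sdiff_subset_sdiff_left hTS)⟩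

lemma isCsStarNetworkAt_univ (x : X) : IsCsStarNetworkAt (univ : Set (Set X)) x := by
  intro U hU S hS
  refine ⟨S ∩ U, mem_univ _, inter_subset_right, ?_⟩
  rw [← inter_assoc, inter_self, ← sdiff_sdiff_right_self]
  exact hS.2.1.sdiff (hS.2.2 U hU)

lemma exists_isCsStarNetworkAt_mk_eq (x : X) :
    ∃ 𝒩 : Set (Set X), IsCsStarNetworkAt 𝒩 x ∧ #𝒩 = csStarCharAt x :=
  csInf_mem (s := {c | ∃ 𝒩 : Set (Set X), IsCsStarNetworkAt 𝒩 x ∧ #𝒩 = c})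
    ⟨_, univ, isCsStarNetworkAt_univ x, rfl⟩

lemma IsCsStarNetworkAt.isSeqBarrierAt_sUnion {𝒩 : Set (Set X)} (h𝒩 : IsCsStarNetworkAt 𝒩 x)
    {U : Set X} (hU : U ∈ 𝓝 x) : IsSeqBarrierAt (⋃₀ {N ∈ 𝒩 | N ⊆ U}) x := by
  intro S hS
  by_contra hinf
  obtain ⟨N, hN, hNU, hmeet⟩ := h𝒩 U hU _ (hS.mono sdiff_subset hinf)
  exact hmeet (finite_empty.subset fun y ⟨hy, hyN⟩ => hy.2 ⟨N, ⟨hN, hNU⟩, hyN⟩)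

lemma IsCsStarNetworkAt.isSbNetworkAt_image_powerset {𝒩 : Set (Set X)}
    (h𝒩 : IsCsStarNetworkAt 𝒩 x) :
    IsSbNetworkAt ((fun ℳ : Set (Set X) => insert x (⋃₀ ℳ)) '' 𝒩.powerset) x := by
  intro U hU
  refine ⟨_, mem_image_of_mem _ (sep_subset 𝒩 (· ⊆ U)), mem_insert x _,
    insert_subset (mem_of_mem_nhds hU) (sUnion_subset fun N hN => hN.2), ?_⟩
  exact fun S hS => ((h𝒩.isSeqBarrierAt_sUnion hU) S hS).subset
    (sdiff_subset_sdiff_right (subset_insert x _))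

lemma sbCharAt_le_two_pow_csStarCharAt (x : X) : sbCharAt x ≤ 2 ^ csStarCharAt x := by
  obtain ⟨𝒩, h𝒩, hcard⟩ := exists_isCsStarNetworkAt_mk_eq x
  calc sbCharAt x ≤ #((fun ℳ : Set (Set X) => insert x (⋃₀ ℳ)) '' 𝒩.powerset) :=
        csInf_le' ⟨_, h𝒩.isSbNetworkAt_image_powerset, rfl⟩
    _ ≤ #𝒩.powerset := mk_image_le
    _ = 2 ^ csStarCharAt x := by rw [mk_powerset, hcard]

end

theorem sbChar_le_two_pow_csStarChar_general (X : Type u) [TopologicalSpace X] :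
    sbChar X ≤ 2 ^ csStarChar X := by
  refine max_le (Cardinal.one_le_iff_ne_zero.mpr (power_ne_zero _ two_ne_zero))
    (ciSup_le' fun x => ?_)
  calc sbCharAt x ≤ 2 ^ csStarCharAt x := sbCharAt_le_two_pow_csStarCharAt x
    _ ≤ 2 ^ csStarChar X :=
      power_le_power_left two_ne_zero (le_max_of_le_right (le_ciSup bddAbove_of_small x))

/-- For every T1 topological space `X`, `sb_χ(X) ≤ 2 ^ cs*_χ(X)`. -/
theorem sbChar_le_two_pow_csStarChar (X : Type u) [TopologicalSpace X] [T1Space X] :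
    sbChar X ≤ 2 ^ csStarChar X :=
  sbChar_le_two_pow_csStarChar_general X
end

section
/- Every Fréchet-Urysohn sequential T1 topological group with countable cs*-character is metrizable. -/
open Set Filter Topology Cardinal Pointwise

universe u v

/-!
A Fréchet–Urysohn group is strongly Fréchet at the identity (Nyikos): given sequences
`x n m → 1` in a decreasing family `A n` of sets avoiding `1`, a sequence in
`{x 0 n * x n m}` converging to `1` must have `n → ∞`, and then the corresponding `x n m`
converge to `1` while eventually lying in each `A j`. At a point where a space is strongly
Fréchet, the sets `{x} ∪ ⋃ F`, for finite subfamilies `F` of a countable cs*-network, that are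
neighbourhoods of `x` form a countable neighbourhood base. A first-countable group is metrizable
by the Birkhoff–Kakutani theorem.
-/

/-- The strong Fréchet property at `x`, for decreasing sequences of sets avoiding `x`. The
sequence `u` is only asked to lie eventually in each `A n`; passing to a subsequence gives the
usual form `u n ∈ A n`. -/
def IsStronglyFrechetAt {X : Type*} [TopologicalSpace X] (x : X) : Prop :=
  ∀ A : ℕ → Set X, Antitone A → (∀ n, x ∉ A n) → (∀ n, x ∈ closure (A n)) →
    ∃ u : ℕ → X, Tendsto u atTop (𝓝 x) ∧ ∀ n, ∀ᶠ k in atTop, u k ∈ A n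

theorem finite_range_inter_of_eventually_notMem {X : Type*} {u : ℕ → X} {s : Set X}
    (h : ∀ᶠ k in atTop, u k ∉ s) : (range u ∩ s).Finite := by
  rw [← Nat.cofinite_eq_atTop, eventually_cofinite] at h
  refine (h.image u).subset ?_
  rintro _ ⟨⟨k, rfl⟩, hk⟩
  exact ⟨k, not_not_intro hk, rfl⟩

section Sequences

variable {X : Type*} [TopologicalSpace X]

theorem convSeqTo_range [T1Space X] {u : ℕ → X} {x : X} (hu : Tendsto u atTop (𝓝 x))
    (hne : ∀ᶠ k in atTop, u k ≠ x) : ConvSeqTo (range u) x := by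
  refine ⟨countable_range u, fun hfin => ?_, fun U hU =>
    finite_range_inter_of_eventually_notMem ((hu.eventually_mem hU).mono fun _ hk hkU => hkU hk)⟩
  have hclosed : IsClosed (range u \ {x}) := hfin.sdiff.isClosed
  obtain ⟨k, hk, hkx⟩ :=
    ((hu.eventually_mem (hclosed.isOpen_compl.mem_nhds (by simp))).and hne).exists
  exact hk ⟨mem_range_self k, hkx⟩

theorem Filter.Tendsto.eventually_nhdsNE_notMem_range [T2Space X] {u : ℕ → X} {a c : X}
    (hu : Tendsto u atTop (𝓝 a)) (hc : c ≠ a) : ∀ᶠ z in 𝓝[≠] c, z ∉ range u := by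
  obtain ⟨W, V, hWo, hVo, hcW, haV, hWV⟩ := t2_separation hc
  have hfin : (range u ∩ W).Finite := finite_range_inter_of_eventually_notMem
    ((hu.eventually_mem (hVo.mem_nhds haV)).mono fun _ hk hkW => hWV.ne_of_mem hkW hk rfl)
  filter_upwards [nhdsWithin_le_nhds (hWo.mem_nhds hcW),
    nhdsNE_le_cofinite c hfin.compl_mem_cofinite] with z hzW hz hzu
  exact hz ⟨hzu, hzW⟩

end Sequences

theorem IsTopologicalGroup.isStronglyFrechetAt_one (G : Type*) [Group G] [TopologicalSpace G]
    [IsTopologicalGroup G] [T1Space G] [FrechetUrysohnSpace G] : IsStronglyFrechetAt (1 : G) := by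
  intro A hA h1 hcl
  choose x hxA hx using fun n => mem_closure_iff_seq_limit.mp (hcl n)
  have hx0 : ∀ n, x 0 n ≠ 1 := fun n h => h1 0 (h ▸ hxA 0 n)
  set S : Set G := range (fun p : ℕ × ℕ => x 0 p.1 * x p.1 p.2) \ {1}
  have hxS : ∀ n, x 0 n ∈ closure S := fun n => by
    have hlim : Tendsto (fun m => x 0 n * x n m) atTop (𝓝 (x 0 n)) := by
      simpa using tendsto_const_nhds.mul (hx n)
    exact mem_closure_of_tendsto hlim
      ((hlim.eventually_ne (hx0 n)).mono fun m hm => ⟨⟨(n, m), rfl⟩, hm⟩)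
  have h1S : (1 : G) ∈ closure S :=
    closure_closure (s := S) ▸ mem_closure_of_tendsto (hx 0) (.of_forall hxS)
  obtain ⟨y, hyS, hy⟩ := mem_closure_iff_seq_limit.mp h1S
  choose p hp using fun k => (hyS k).1
  beta_reduce at hp
  -- `(x 0 n₀)⁻¹ ≠ 1` is isolated from the sequence `x n₀ → 1`, so `y` eventually leaves row `n₀`.
  have hn : Tendsto (fun k => (p k).1) atTop cofinite := by
    refine le_cofinite_iff_eventually_ne.mpr fun n₀ => eventually_map.mpr ?_
    have hz : Tendsto (fun k => (x 0 n₀)⁻¹ * y k) atTop (𝓝[≠] (x 0 n₀)⁻¹) :=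
      tendsto_nhdsWithin_iff.mpr ⟨by simpa using tendsto_const_nhds.mul hy,
        .of_forall fun k => by simpa using (hyS k).2⟩
    filter_upwards [hz.eventually
      ((hx n₀).eventually_nhdsNE_notMem_range (inv_ne_one.mpr (hx0 n₀)))] with k hk hkn
    exact hk ⟨(p k).2, by rw [← hp k, hkn, inv_mul_cancel_left]⟩
  rw [Nat.cofinite_eq_atTop] at hn
  refine ⟨fun k => x (p k).1 (p k).2, ?_, fun j => ?_⟩
  · have hlim : Tendsto (fun k => (x 0 (p k).1)⁻¹ * y k) atTop (𝓝 1) := by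
      simpa using ((hx 0).comp hn).inv.mul hy
    exact hlim.congr fun k => by rw [← hp k, inv_mul_cancel_left]
  · filter_upwards [hn.eventually_ge_atTop j] with k hk using hA hk (hxA _ _)

section CsStarNetwork

variable {X : Type*} [TopologicalSpace X] [T1Space X] {x : X} {𝒩 : Set (Set X)}

/-- Enumerate the members of `𝒩` inside `U`; if no finite initial union were a neighbourhood
of `x`, the strong Fréchet property would give a sequence converging to `x` that eventually
leaves each of them, which no member of the cs*-network can then catch. -/
theorem IsStronglyFrechetAt.exists_finite_insert_sUnion_mem_nhds (hx : IsStronglyFrechetAt x)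
    (h𝒩c : 𝒩.Countable) (h𝒩 : IsCsStarNetworkAt 𝒩 x) {U : Set X} (hU : U ∈ 𝓝 x) :
    ∃ F : Set (Set X), F.Finite ∧ F ⊆ 𝒩 ∧ insert x (⋃₀ F) ∈ 𝓝 x ∧ ⋃₀ F ⊆ U := by
  set 𝒩U := {N ∈ 𝒩 | N ⊆ U}
  obtain ⟨g, hg⟩ : ∃ g : Set X → ℕ, InjOn g 𝒩U :=
    countable_iff_exists_injOn.mp (h𝒩c.mono (sep_subset _ _))
  set F : ℕ → Set (Set X) := fun k => {N ∈ 𝒩U | g N < k}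
  have hFfin : ∀ k, (F k).Finite := fun k =>
    Finite.of_finite_image ((finite_Iio k).subset (image_subset_iff.mpr fun _ hN => hN.2))
      (hg.mono (sep_subset _ _))
  suffices ∃ k, insert x (⋃₀ F k) ∈ 𝓝 x by
    obtain ⟨k, hk⟩ := this
    exact ⟨F k, hFfin k, fun _ hN => hN.1.1, hk, sUnion_subset fun _ hN => hN.1.2⟩
  by_contra! hcon
  have hanti : Antitone fun k => (insert x (⋃₀ F k))ᶜ := fun a b hab =>
    compl_subset_compl.mpr (insert_subset_insert (sUnion_subset_sUnion
      fun _ hN => ⟨hN.1, hN.2.trans_le hab⟩))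
  obtain ⟨u, hu, huF⟩ := hx _ hanti (fun k hk => hk (mem_insert x _))
    (fun k => by simpa [closure_compl, mem_interior_iff_mem_nhds] using hcon k)
  have hconv : ConvSeqTo (range u) x :=
    convSeqTo_range hu ((huF 0).mono fun _ hk hkx => hk (hkx ▸ mem_insert _ _))
  obtain ⟨N, hN𝒩, hNU, hinf⟩ := h𝒩 U hU _ hconv
  exact hinf (finite_range_inter_of_eventually_notMem ((huF (g N + 1)).mono fun _ hk hkN =>
    hk (mem_insert_of_mem _ ⟨N, ⟨⟨hN𝒩, hNU⟩, lt_add_one _⟩, hkN⟩)))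

theorem IsStronglyFrechetAt.isCountablyGenerated_nhds (hx : IsStronglyFrechetAt x)
    (h𝒩c : 𝒩.Countable) (h𝒩 : IsCsStarNetworkAt 𝒩 x) : (𝓝 x).IsCountablyGenerated := by
  refine HasCountableBasis.isCountablyGenerated
    (p := fun F => (F.Finite ∧ F ⊆ 𝒩) ∧ insert x (⋃₀ F) ∈ 𝓝 x) (s := fun F => insert x (⋃₀ F))
    ⟨⟨fun U => ⟨fun hU => ?_, fun ⟨_, hF, hFU⟩ => mem_of_superset hF.2 hFU⟩⟩,
      (countable_ofPred_finite_subset h𝒩c).mono fun _ hF => hF.1⟩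
  obtain ⟨F, hFfin, hF𝒩, hFx, hFU⟩ := hx.exists_finite_insert_sUnion_mem_nhds h𝒩c h𝒩 hU
  exact ⟨F, ⟨⟨hFfin, hF𝒩⟩, hFx⟩, insert_subset (mem_of_mem_nhds hU) hFU⟩

end CsStarNetwork

theorem IsTopologicalGroup.metrizableSpace_of_isCountablyGenerated_nhds_one (G : Type*)
    [Group G] [TopologicalSpace G] [IsTopologicalGroup G] [T0Space G]
    [(𝓝 (1 : G)).IsCountablyGenerated] : TopologicalSpace.MetrizableSpace G :=
  letI : UniformSpace G := IsTopologicalGroup.rightUniformSpace G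
  haveI : (uniformity G).IsCountablyGenerated := comap.isCountablyGenerated _ _
  UniformSpace.metrizableSpace

theorem frechetUrysohn_group_metrizable_general (G : Type u) [Group G] [TopologicalSpace G]
    [IsTopologicalGroup G] [T1Space G] [FrechetUrysohnSpace G]
    (hcs : CountableCsStarChar G) :
    TopologicalSpace.MetrizableSpace G := by
  obtain ⟨𝒩, h𝒩c, h𝒩⟩ := hcs 1
  have := (IsTopologicalGroup.isStronglyFrechetAt_one G).isCountablyGenerated_nhds h𝒩c h𝒩
  exact IsTopologicalGroup.metrizableSpace_of_isCountablyGenerated_nhds_one G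

/-- Every Fréchet-Urysohn sequential T1 topological group with countable cs*-character is
metrizable. -/
theorem frechetUrysohn_group_metrizable (G : Type u) [Group G] [TopologicalSpace G]
    [IsTopologicalGroup G] [T1Space G] [SequentialSpace G] [FrechetUrysohnSpace G]
    (hcs : CountableCsStarChar G) :
    TopologicalSpace.MetrizableSpace G :=
  frechetUrysohn_group_metrizable_general G hcs
end

section
/- A dyadic compactum is metrizable if and only if it has countable cs*-character. -/
open Set Filter Topology Cardinal Pointwise

universe u v

/-!
Metrizable spaces are first countable, and a countable neighbourhood base is a cs*-network.

Conversely, let `f : 2^ι → X` be a continuous surjection and call a coordinate essential if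
flipping it can change the value of `f`. By continuity `f` depends only on its essential
coordinates, so if there are countably many of them, `X` is a continuous image of a compact
metrizable cube, hence second countable and metrizable. If there are uncountably many, a
Δ-system argument yields one point `c` of the cube and uncountably many essential `i` such that
flipping `c` at `i` moves `f c`; the values so obtained form an uncountable set `D` of which
every neighbourhood of `f c` contains all but finitely many points. Given a countable family
`𝒩`, pick `p ∈ D` that is not in the finite set left uncovered by any finite subfamily of `𝒩`
almost covering `D`. A diagonal sequence in `D` meeting each member of `𝒩` that misses `p` only
finitely often then shows that `𝒩` is not a cs*-network at `f c` for the neighbourhood `{p}ᶜ`.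
-/

open Function TopologicalSpace

section DeltaSystem

variable {α ι : Type*}

theorem exists_not_countable_fiber {β : Type*} [Countable β] {A : Set α}
    (hA : ¬A.Countable) (g : α → β) : ∃ b, ¬{i ∈ A | g i = b}.Countable := by
  by_contra! h
  exact hA <| (countable_iUnion h).mono fun i hi =>
    mem_iUnion.2 ⟨g i, (⟨hi, rfl⟩ : i ∈ {j ∈ A | g j = g i})⟩

theorem exists_not_countable_pairwiseDisjoint {A : Set α} (hA : ¬A.Countable) (F : α → Set ι)
    (hF : ∀ i, (F i).Countable) (hF' : ∀ x, {i ∈ A | x ∈ F i}.Countable) :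
    ∃ B ⊆ A, ¬B.Countable ∧ B.PairwiseDisjoint F := by
  obtain ⟨B, hB⟩ := zorn_subset {B | B ⊆ A ∧ B.PairwiseDisjoint F} fun c hcS hc =>
    ⟨⋃₀ c, ⟨sUnion_subset fun B hB => (hcS hB).1,
      (hc.pairwiseDisjoint_sUnion F).2 fun B hB => (hcS hB).2⟩, fun _ => subset_sUnion_of_mem⟩
  refine ⟨B, hB.prop.1, fun hBc => ?_, hB.prop.2⟩
  have hmeet : {i ∈ A | ∃ x ∈ ⋃ j ∈ B, F j, x ∈ F i}.Countable :=
    ((hBc.biUnion fun j _ => hF j).biUnion fun x _ => hF' x).mono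
      fun i ⟨hiA, x, hx, hxi⟩ => mem_biUnion hx (⟨hiA, hxi⟩ : i ∈ {i ∈ A | x ∈ F i})
  obtain ⟨i, hiA, hi⟩ := not_subset.1 fun h => hA ((hBc.union hmeet).mono h)
  have hiB : i ∉ B := fun h => hi (Or.inl h)
  refine hiB (hB.mem_of_prop_insert ⟨insert_subset hiA hB.prop.1, hB.prop.2.insert ?_⟩)
  refine fun j hj _ => disjoint_left.2 fun x hxi hxj => hi (Or.inr ⟨hiA, x, ?_, hxi⟩)
  exact mem_biUnion hj hxj

theorem exists_not_countable_deltaSystem_of_card_le [DecidableEq ι] (n : ℕ) {A : Set α}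
    (hA : ¬A.Countable) (F : α → Finset ι) (hn : ∀ i ∈ A, (F i).card ≤ n) :
    ∃ R : Finset ι, ∃ B ⊆ A, ¬B.Countable ∧ B.Pairwise fun i j => F i ∩ F j ⊆ R := by
  induction n generalizing A F with
  | zero =>
    refine ⟨∅, A, subset_rfl, hA, fun i hi j _ _ => ?_⟩
    simp only [Finset.card_eq_zero.1 (Nat.le_zero.1 (hn i hi)), Finset.empty_inter, subset_refl]
  | succ n ih =>
    by_cases hx : ∃ x, ¬{i ∈ A | x ∈ F i}.Countable
    · obtain ⟨x, hx⟩ := hx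
      obtain ⟨R, B, hBA, hB, hR⟩ := ih hx (fun i => (F i).erase x) fun i hi => by
        rw [Finset.card_erase_of_mem hi.2]
        exact Nat.sub_le_of_le_add (hn i hi.1)
      refine ⟨insert x R, B, hBA.trans (sep_subset _ _), hB, fun i hi j hj hij y hy => ?_⟩
      rw [Finset.mem_insert]
      by_cases hyx : y = x
      · exact Or.inl hyx
      · exact Or.inr (hR hi hj hij (by simp [Finset.mem_inter.1 hy, hyx]))
    · push Not at hx
      obtain ⟨B, hBA, hB, hdisj⟩ := exists_not_countable_pairwiseDisjoint hA
        (fun i => (F i : Set ι)) (fun i => (F i).countable_toSet) hx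
      refine ⟨∅, B, hBA, hB, fun i hi j hj hij => ?_⟩
      have := hdisj hi hj hij
      rw [onFun, Finset.disjoint_coe, Finset.disjoint_iff_inter_eq_empty] at this
      simp only [this, subset_refl]

theorem exists_not_countable_deltaSystem [DecidableEq ι] {A : Set α} (hA : ¬A.Countable)
    (F : α → Finset ι) :
    ∃ R : Finset ι, ∃ B ⊆ A, ¬B.Countable ∧ B.Pairwise fun i j => F i ∩ F j ⊆ R := by
  obtain ⟨n, hn⟩ := exists_not_countable_fiber hA fun i => (F i).card
  obtain ⟨R, B, hBA, hB, hR⟩ :=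
    exists_not_countable_deltaSystem_of_card_le n hn F fun i hi => hi.2.le
  exact ⟨R, B, hBA.trans (sep_subset _ _), hB, hR⟩

theorem exists_not_countable_compatible {β : Type*} [Countable β] {A : Set α}
    (hA : ¬A.Countable) (F : α → Finset ι) (a : α → ι → β) :
    ∃ B ⊆ A, ¬B.Countable ∧ ∃ c : ι → β, ∀ i ∈ B, ∀ j ∈ F i, c j = a i j := by
  classical
  obtain ⟨R, B₀, hB₀A, hB₀, hR⟩ := exists_not_countable_deltaSystem hA F
  obtain ⟨σ, hσ⟩ := exists_not_countable_fiber hB₀ fun i (j : R) => a i j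
  set B := {i ∈ B₀ | (fun j : R => a i j) = σ}
  have hagree : ∀ i ∈ B, ∀ i' ∈ B, ∀ j ∈ F i, j ∈ F i' → a i j = a i' j := by
    intro i hi i' hi' j hj hj'
    obtain rfl | hii' := eq_or_ne i i'
    · rfl
    have hjR : j ∈ R := hR hi.1 hi'.1 hii' (Finset.mem_inter.2 ⟨hj, hj'⟩)
    exact (congrFun hi.2 ⟨j, hjR⟩).trans (congrFun hi'.2 ⟨j, hjR⟩).symm
  obtain ⟨i₀, -⟩ := Set.Infinite.nonempty fun h : Set.Finite _ => hσ h.countable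
  refine ⟨B, (sep_subset _ _).trans hB₀A, hσ,
    fun j => if h : ∃ i ∈ B, j ∈ F i then a h.choose j else a i₀ j, fun i hi j hj => ?_⟩
  have h : ∃ i ∈ B, j ∈ F i := ⟨i, hi, hj⟩
  simp only [dif_pos h]
  exact hagree _ h.choose_spec.1 i hi j h.choose_spec.2 hj

end DeltaSystem

section ProductTopology

variable {ι : Type*} {A : ι → Type*} [∀ i, TopologicalSpace (A i)]

theorem exists_finset_eqOn_imp_mem_of_mem_nhds [∀ i, DiscreteTopology (A i)] {a : ∀ i, A i}
    {W : Set (∀ i, A i)} (hW : W ∈ 𝓝 a) : ∃ I : Finset ι, ∀ b, (∀ j ∈ I, b j = a j) → b ∈ W := by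
  rw [nhds_pi, Filter.mem_pi'] at hW
  obtain ⟨I, t, ht, hIt⟩ := hW
  refine ⟨I, fun b hb => hIt fun j hj => ?_⟩
  rw [hb j hj]
  exact mem_of_mem_nhds (ht j)

theorem tendsto_update_cofinite [DecidableEq ι] (c v : ∀ i, A i) :
    Tendsto (fun i => update c i (v i)) cofinite (𝓝 c) :=
  tendsto_pi_nhds.2 fun j => tendsto_const_nhds.congr' <|
    (eventually_cofinite_ne j).mono fun _ hij => (update_of_ne hij.symm _ _).symm

theorem tendsto_finset_piecewise_atTop [DecidableEq ι] (a b : ∀ i, A i) :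
    Tendsto (fun I : Finset ι => I.piecewise b a) atTop (𝓝 b) :=
  tendsto_pi_nhds.2 fun j => tendsto_const_nhds.congr' <|
    (eventually_ge_atTop {j}).mono fun _ hI =>
      (Finset.piecewise_eq_of_mem _ _ _ (Finset.singleton_subset_iff.1 hI)).symm

end ProductTopology

theorem secondCountableTopology_of_continuous_surjective {K X : Type*} [TopologicalSpace K]
    [TopologicalSpace X] [CompactSpace K] [SecondCountableTopology K] [T2Space X] {f : K → X}
    (hf : Continuous f) (hsurj : Surjective f) : SecondCountableTopology X := by
  obtain ⟨b, hbc, -, hb⟩ := exists_countable_basis K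
  -- `(f '' Wᶜ)ᶜ` is the set of points whose whole fibre lies in `W`; it is open as `f` is closed.
  let fibresIn : Set K → Set X := fun W => (f '' Wᶜ)ᶜ
  refine (isTopologicalBasis_of_isOpen_of_nhds
    (s := (fun G => fibresIn (⋃₀ G)) '' {G | G.Finite ∧ G ⊆ b}) ?_ fun x V hxV hV => ?_)
    |>.secondCountableTopology ((countable_ofPred_finite_subset hbc).image _)
  · rintro _ ⟨G, ⟨-, hGb⟩, rfl⟩
    exact (hf.isClosedMap _
      (isOpen_sUnion fun W hW => hb.isOpen (hGb hW)).isClosed_compl).isOpen_compl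
  have hfibre : f ⁻¹' {x} ⊆ ⋃ W ∈ {W ∈ b | W ⊆ f ⁻¹' V}, W := fun k hk =>
    let ⟨W, hWb, hkW, hWV⟩ := hb.exists_subset_of_mem_open (show f k ∈ V from hk ▸ hxV)
      (hV.preimage hf)
    mem_biUnion ⟨hWb, hWV⟩ hkW
  obtain ⟨G, hG, hGf, hxG⟩ :=
    (isClosed_singleton.preimage hf).isCompact.elim_finite_subcover_image
      (fun W hW => hb.isOpen hW.1) hfibre
  refine ⟨fibresIn (⋃₀ G), ⟨G, ⟨hGf, fun W hW => (hG hW).1⟩, rfl⟩, ?_, fun y hy => ?_⟩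
  · rintro ⟨k, hkG, rfl⟩
    exact hkG (sUnion_eq_biUnion ▸ hxG rfl)
  · obtain ⟨k, rfl⟩ := hsurj y
    by_contra hkV
    exact hy ⟨k, fun ⟨W, hW, hkW⟩ => hkV ((hG hW).2 hkW), rfl⟩

theorem not_countable_image_of_tendsto_cofinite {α X : Type*} [TopologicalSpace X] [T1Space X]
    {d : α → X} {x : X} (hd : Tendsto d cofinite (𝓝 x)) {B : Set α} (hB : ¬B.Countable)
    (hne : ∀ i ∈ B, d i ≠ x) : ¬(d '' B).Countable := by
  have hfibre : ∀ y ∈ d '' B, {i | d i = y}.Finite := by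
    rintro _ ⟨i, hi, rfl⟩
    exact (eventually_cofinite.1 (hd.eventually_ne (hne i hi).symm)).subset
      fun j hj => not_not.2 hj
  exact fun h => hB <| (h.biUnion fun y hy => (hfibre y hy).countable).mono
    fun i hi => mem_biUnion (mem_image_of_mem d hi) rfl

section EssentialCoords

variable {ι X : Type*} [DecidableEq ι]

def essentialCoords (f : (ι → Bool) → X) : Set ι :=
  {i | ∃ a, f (update a i (!a i)) ≠ f a}

theorem apply_update_of_notMem_essentialCoords {f : (ι → Bool) → X} {i : ι}
    (hi : i ∉ essentialCoords f) (a : ι → Bool) (v : Bool) : f (update a i v) = f a := by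
  by_cases hv : v = a i
  · rw [hv, update_eq_self]
  · rw [Bool.eq_not.2 hv]
    exact not_not.1 fun h => hi ⟨a, h⟩

theorem dependsOn_essentialCoords [TopologicalSpace X] [T1Space X] {f : (ι → Bool) → X}
    (hf : Continuous f) : DependsOn f (essentialCoords f) := by
  intro b a hab
  -- Changing finitely many inessential coordinates of `a` does not move `f a`; pass to the limit.
  have hfin : ∀ I : Finset ι, f (I.piecewise b a) = f a := by
    intro I
    induction I using Finset.induction_on with
    | empty => rw [Finset.piecewise_empty]
    | insert j I hjI ih =>
      rw [Finset.piecewise_insert, ← ih]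
      by_cases hj : j ∈ essentialCoords f
      · rw [hab j hj, ← Finset.piecewise_eq_of_notMem I b a hjI, update_eq_self]
      · exact apply_update_of_notMem_essentialCoords hj _ _
  have := (hf.tendsto b).comp (tendsto_finset_piecewise_atTop a b)
  exact (tendsto_const_nhds_iff.1 (this.congr hfin)).symm

theorem metrizableSpace_of_countable_essentialCoords [TopologicalSpace X] [T2Space X]
    {f : (ι → Bool) → X} (hf : Continuous f) (hsurj : Surjective f)
    (hE : (essentialCoords f).Countable) : MetrizableSpace X := by
  classical
  have := hsurj.compactSpace hf
  have := hE.to_subtype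
  let extend : (essentialCoords f → Bool) → ι → Bool := fun z i =>
    if h : i ∈ essentialCoords f then z ⟨i, h⟩ else false
  have hextend : Continuous extend := continuous_pi fun i => by
    by_cases h : i ∈ essentialCoords f
    · simpa [extend, h] using continuous_apply (⟨i, h⟩ : essentialCoords f)
    · simpa [extend, h] using continuous_const
  have : SecondCountableTopology X := by
    refine secondCountableTopology_of_continuous_surjective (hf.comp hextend) fun x => ?_
    obtain ⟨a, rfl⟩ := hsurj x
    exact ⟨fun i => a i, dependsOn_essentialCoords hf fun i hi => by simp [extend, hi]⟩
  exact metrizableSpace_of_t3_secondCountable X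

theorem exists_finset_forall_apply_update_ne [TopologicalSpace X] [T2Space X]
    {f : (ι → Bool) → X} (hf : Continuous f) {i : ι} (hi : i ∈ essentialCoords f) :
    ∃ (a : ι → Bool) (F : Finset ι),
      ∀ b, (∀ j ∈ F, b j = a j) → f (update b i (!b i)) ≠ f b := by
  obtain ⟨a, ha⟩ := hi
  have hW : IsOpen {b : ι → Bool | f (update b i (!b i)) ≠ f b} :=
    isOpen_ne_fun (hf.comp (continuous_id.update i
      ((continuous_of_discreteTopology (f := not)).comp (continuous_apply i)))) hf
  obtain ⟨F, hF⟩ := exists_finset_eqOn_imp_mem_of_mem_nhds (hW.mem_nhds ha)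
  exact ⟨a, F, hF⟩

theorem exists_not_countable_forall_nhds_finite_diff [TopologicalSpace X] [T2Space X]
    {f : (ι → Bool) → X} (hf : Continuous f) (hE : ¬(essentialCoords f).Countable) :
    ∃ x : X, ∃ D : Set X, ¬D.Countable ∧ ∀ U ∈ 𝓝 x, (D \ U).Finite := by
  choose! a F haF using fun i (hi : i ∈ essentialCoords f) =>
    exists_finset_forall_apply_update_ne hf hi
  obtain ⟨B, hBE, hB, c, hc⟩ := exists_not_countable_compatible hE F a
  let d i := f (update c i (!c i))
  have hd : Tendsto d cofinite (𝓝 (f c)) :=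
    (hf.tendsto c).comp (tendsto_update_cofinite c fun i => !c i)
  refine ⟨f c, d '' B, not_countable_image_of_tendsto_cofinite hd hB
    fun i hi => haF i (hBE hi) c (hc i hi), fun U hU => ?_⟩
  refine ((eventually_cofinite.1 (hd.eventually_mem hU)).image d).subset ?_
  rintro _ ⟨⟨i, -, rfl⟩, hiU⟩
  exact mem_image_of_mem d hiU

end EssentialCoords

section CsStarNetwork

variable {α : Type*}

theorem exists_mem_forall_infinite_diff_sUnion {𝒩 : Set (Set α)} (h𝒩 : 𝒩.Countable)
    {D : Set α} (hD : ¬D.Countable) (x : α) :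
    ∃ p ∈ D, p ≠ x ∧ ∀ G ⊆ {N ∈ 𝒩 | p ∉ N}, G.Finite → (D \ ⋃₀ G).Infinite := by
  let J := ⋃ G ∈ {G | (G.Finite ∧ G ⊆ 𝒩) ∧ (D \ ⋃₀ G).Finite}, D \ ⋃₀ G
  have hJ : J.Countable :=
    ((countable_ofPred_finite_subset h𝒩).mono fun _ hG => hG.1).biUnion fun _ hG => hG.2.countable
  obtain ⟨p, hpD, hp⟩ := not_subset.1 fun h => hD ((hJ.union (countable_singleton x)).mono h)
  refine ⟨p, hpD, fun h => hp (Or.inr h), fun G hG hGf => not_finite.1 fun hfin => hp (Or.inl ?_)⟩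
  refine mem_biUnion ⟨⟨hGf, fun N hN => (hG hN).1⟩, hfin⟩ ⟨hpD, ?_⟩
  rintro ⟨N, hN, hpN⟩
  exact (hG hN).2 hpN

theorem exists_infinite_subset_forall_finite_inter {𝒜 : Set (Set α)} (h𝒜 : 𝒜.Countable)
    {D : Set α} (hD : ∀ G ⊆ 𝒜, G.Finite → (D \ ⋃₀ G).Infinite) :
    ∃ S ⊆ D, S.Countable ∧ S.Infinite ∧ ∀ A ∈ 𝒜, (S ∩ A).Finite := by
  obtain ⟨e, he⟩ := (h𝒜.insert ∅).exists_eq_range (insert_nonempty _ _)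
  have hg : ∀ n, (D \ ⋃ k < n, e k).Infinite := fun n => by
    refine (hD (e '' Iio n ∩ 𝒜) inter_subset_right
      (((finite_Iio n).image e).inter_of_left _)).mono (sdiff_subset_sdiff_right fun y hy => ?_)
    obtain ⟨k, hk, hyk⟩ := mem_iUnion₂.1 hy
    have : e k ∈ insert ∅ 𝒜 := he ▸ mem_range_self k
    exact ⟨e k, ⟨mem_image_of_mem e hk, this.resolve_left (nonempty_of_mem hyk).ne_empty⟩, hyk⟩
  -- `T n` has `n` points and avoids `e 0, …, e (n - 1)`, so `⋃ n, T n` meets each `e k` finitely.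
  choose T hTg hTcard using fun n => (hg n).exists_subset_card_eq n
  refine ⟨⋃ n, T n, iUnion_subset fun n => (hTg n).trans sdiff_subset,
    countable_iUnion fun n => (T n).countable_toSet, fun hfin => ?_, fun A hA => ?_⟩
  · have hsub : T (hfin.toFinset.card + 1) ⊆ hfin.toFinset := fun y hy =>
      hfin.mem_toFinset.2 (mem_iUnion.2 ⟨_, hy⟩)
    have := Finset.card_le_card hsub
    rw [hTcard] at this
    omega
  · obtain ⟨k, rfl⟩ : A ∈ range e := he ▸ mem_insert_of_mem _ hA
    refine ((finite_le_nat k).biUnion fun n _ => (T n).finite_toSet).subset ?_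
    rintro y ⟨hyT, hyk⟩
    obtain ⟨n, hn⟩ := mem_iUnion.1 hyT
    exact mem_biUnion (not_lt.1 fun hkn => (hTg n hn).2 (mem_iUnion₂.2 ⟨k, hkn, hyk⟩)) hn

variable [TopologicalSpace α]

theorem not_isCsStarNetworkAt_of_forall_nhds_finite_diff [T1Space α] {x : α} {D : Set α}
    (hD : ¬D.Countable) (hconv : ∀ U ∈ 𝓝 x, (D \ U).Finite) {𝒩 : Set (Set α)}
    (h𝒩 : 𝒩.Countable) : ¬IsCsStarNetworkAt 𝒩 x := by
  intro hnet
  obtain ⟨p, hpD, hpx, hp⟩ := exists_mem_forall_infinite_diff_sUnion h𝒩 hD x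
  obtain ⟨S, hSD, hSc, hSi, hS⟩ :=
    exists_infinite_subset_forall_finite_inter (h𝒩.mono (sep_subset _ _)) hp
  have hSx : ConvSeqTo S x :=
    ⟨hSc, hSi, fun U hU => (hconv U hU).subset (sdiff_subset_sdiff_left hSD)⟩
  obtain ⟨N, hN, hNp, hSN⟩ := hnet {p}ᶜ (isOpen_compl_singleton.mem_nhds hpx.symm) S hSx
  exact hSN (hS N ⟨hN, fun h => hNp h rfl⟩)

theorem countableCsStarChar_of_firstCountableTopology [FirstCountableTopology α] :
    CountableCsStarChar α := by
  intro x
  obtain ⟨u, hu⟩ := (𝓝 x).exists_antitone_basis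
  refine ⟨range u, countable_range u, fun U hU S hS => ?_⟩
  obtain ⟨n, hn⟩ := hu.mem_iff.1 hU
  refine ⟨u n, mem_range_self n, hn, ?_⟩
  rw [← sdiff_sdiff_right_self]
  exact hS.2.1.sdiff (hS.2.2 (u n) (hu.mem n))

end CsStarNetwork

theorem dyadic_metrizable_iff_general (X : Type u) [TopologicalSpace X] [T2Space X]
    (hdyadic : ∃ (ι : Type u) (f : (ι → Bool) → X), Continuous f ∧ Function.Surjective f) :
    TopologicalSpace.MetrizableSpace X ↔ CountableCsStarChar X := by
  classical
  refine ⟨fun _ => countableCsStarChar_of_firstCountableTopology, fun hcs => ?_⟩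
  obtain ⟨ι, f, hf, hsurj⟩ := hdyadic
  by_cases hE : (essentialCoords f).Countable
  · exact metrizableSpace_of_countable_essentialCoords hf hsurj hE
  · obtain ⟨x, D, hD, hconv⟩ := exists_not_countable_forall_nhds_finite_diff hf hE
    obtain ⟨𝒩, h𝒩, hnet⟩ := hcs x
    exact absurd hnet (not_isCsStarNetworkAt_of_forall_nhds_finite_diff hD hconv h𝒩)

/-- A dyadic compactum (a compact Hausdorff continuous image of a Cantor cube `{0,1}^κ`) is
metrizable if and only if it has countable cs*-character. -/
theorem dyadic_metrizable_iff (X : Type u) [TopologicalSpace X] [CompactSpace X] [T2Space X]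
    (hdyadic : ∃ (ι : Type u) (f : (ι → Bool) → X), Continuous f ∧ Function.Surjective f) :
    TopologicalSpace.MetrizableSpace X ↔ CountableCsStarChar X :=
  dyadic_metrizable_iff_general X hdyadic
end
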